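/- arXiv:2402.17852 — 2 statements merged into one kernel-verified Lean document; each statement's English description precedes it below -/
import Mathlib

section
/- Let $A$ be a commutative ring, $M_0$ an $A$-module, $\lambda > 1$ a real number, and define $F : M_0((t^{\mathbb{R}})) \to M_0((t^{\mathbb{R}}))$ by $F(\sum m_i t^{d_i}) = \sum m_i t^{\lambda d_i}$. Suppose $S \subseteq M_0((t^{\mathbb{R}}))$ is an $A$-submodule that is closed in the $t$-adic topology, stable under $F$, and stable under multiplication by $t^d$ for every $d \in \mathbb{R}$. Then there exists an $A$-submodule $S_0 \subseteq M_0$ such that $S = S_0((t^{\mathbb{R}}))$. -/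
/-- A subset of `ℝ` is *left-finite* if it meets every interval `(-∞, C)` in a finite set. -/
def LeftFinite (s : Set ℝ) : Prop := ∀ C : ℝ, (s ∩ Set.Iio C).Finite

/-!
Take `S₀ = {m | m t⁰ ∈ S}`; by translation invariance, `m tᵉ ∈ S` iff `m ∈ S₀`.
If `s ∈ S` vanishes below `0`, then below any bound `d` the iterate `Fᵏ s` agrees with
`s 0 · t⁰` for `k` large: `F` fixes the exponent `0` and, since `s` has no exponents in some
interval `(0, δ)`, `Fᵏ` pushes all positive exponents beyond `λᵏ δ > d`. By closedness the
lowest coefficient `s 0` lies in `S₀`. Subtracting lowest terms one at a time, every coefficient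
of every `s ∈ S` lies in `S₀`. Conversely, a series with coefficients in `S₀` is the `t`-adic
limit of its truncations, which are finite sums of monomials in `S`.
-/

open Set Function Filter Topology

theorem LeftFinite.compl_mem_nhdsGT {s : Set ℝ} (hs : LeftFinite s) (a : ℝ) : sᶜ ∈ 𝓝[>] a := by
  have hfin : (s ∩ Ioo a (a + 1)).Finite := (hs (a + 1)).subset fun x hx => ⟨hx.1, hx.2.2⟩
  have ha : a ∉ s ∩ Ioo a (a + 1) := fun h => lt_irrefl a h.2.1
  filter_upwards [nhdsWithin_le_nhds (hfin.isClosed.compl_mem_nhds ha),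
    Ioo_mem_nhdsGT (lt_add_one a)] with x hx hIoo hxs
  exact hx ⟨hxs, hIoo⟩

theorem leftFinite_support_single {M : Type*} [Zero M] (e : ℝ) (m : M) :
    LeftFinite (support (Pi.single e m)) := fun _ =>
  ((finite_singleton e).subset Pi.support_single_subset).inter_of_left _

-- `x` lies in the `t`-adic closure of `S` iff every basic neighbourhood
-- `x + t^d M[[t^{ℝ≥0}]]` meets `S`.
def IsTAdicClosed {M : Type*} [Zero M] (S : Set (ℝ → M)) : Prop :=
  ∀ x : ℝ → M, LeftFinite (support x) → (∀ d : ℝ, ∃ s ∈ S, ∀ e < d, x e = s e) → x ∈ S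

theorem eq_sum_single_apply_of_lt {M : Type*} [AddCommMonoid M] {x : ℝ → M} {d : ℝ}
    (h : (support x ∩ Iio d).Finite) {e : ℝ} (he : e < d) :
    x e = (∑ e' ∈ h.toFinset, Pi.single e' (x e')) e := by
  rw [Finset.sum_apply, Finset.sum_pi_single]
  split_ifs with hmem
  · rfl
  · by_contra hne
    exact hmem (h.mem_toFinset.2 ⟨hne, he⟩)

theorem single_comp_sub {M : Type*} [Zero M] (a e : ℝ) (m : M) :
    (fun d : ℝ => (Pi.single a m : ℝ → M) (d - e)) = Pi.single (a + e) m := by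
  ext d
  simp only [Pi.single_apply, sub_eq_iff_eq_add]

theorem single_mem_iff_single_zero_mem {M : Type*} [Zero M] {S : Set (ℝ → M)}
    (ht : ∀ e : ℝ, ∀ s ∈ S, (fun d : ℝ => s (d - e)) ∈ S) (a : ℝ) (m : M) :
    Pi.single a m ∈ S ↔ Pi.single 0 m ∈ S := by
  constructor <;> intro h
  · simpa only [single_comp_sub, add_neg_cancel] using ht (-a) _ h
  · simpa only [single_comp_sub, zero_add] using ht a _ h

theorem comp_div_pow_mem {M : Type*} {S : Set (ℝ → M)} {lam : ℝ}
    (hF : ∀ s ∈ S, (fun d : ℝ => s (d / lam)) ∈ S) {s : ℝ → M} (hs : s ∈ S) (k : ℕ) :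
    (fun d : ℝ => s (d / lam ^ k)) ∈ S := by
  induction k with
  | zero => simpa using hs
  | succ k ih => simpa [div_div, ← pow_succ'] using hF _ ih

theorem single_zero_mem_of_forall_neg_eq_zero {M : Type*} [Zero M] {S : Set (ℝ → M)}
    {lam : ℝ} (hlam : 1 < lam) (hF : ∀ s ∈ S, (fun d : ℝ => s (d / lam)) ∈ S)
    (hclosed : IsTAdicClosed S) (helem : ∀ s ∈ S, LeftFinite (support s))
    {s : ℝ → M} (hs : s ∈ S) (hneg : ∀ e < 0, s e = 0) :
    Pi.single 0 (s 0) ∈ S := by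
  refine hclosed _ (leftFinite_support_single 0 (s 0)) fun d => ?_
  obtain ⟨δ, hδ, hgap⟩ := mem_nhdsGT_iff_exists_Ioo_subset.1 ((helem s hs).compl_mem_nhdsGT 0)
  obtain ⟨k, hk⟩ := pow_unbounded_of_one_lt (d / δ) hlam
  have hpow : 0 < lam ^ k := by positivity
  refine ⟨fun e => s (e / lam ^ k), comp_div_pow_mem hF hs k, fun e he => ?_⟩
  dsimp only
  rcases lt_trichotomy e 0 with h | rfl | h
  · rw [Pi.single_eq_of_ne h.ne, hneg _ (div_neg_of_neg_of_pos h hpow)]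
  · simp
  · rw [Pi.single_eq_of_ne h.ne', eq_comm, ← notMem_support]
    refine hgap ⟨div_pos h hpow, (div_lt_iff₀ hpow).2 ?_⟩
    rw [div_lt_iff₀ (mem_Ioi.1 hδ)] at hk
    linarith

theorem single_mem_of_forall_lt_eq_zero {M : Type*} [Zero M] {S : Set (ℝ → M)}
    {lam : ℝ} (hlam : 1 < lam) (hF : ∀ s ∈ S, (fun d : ℝ => s (d / lam)) ∈ S)
    (ht : ∀ e : ℝ, ∀ s ∈ S, (fun d : ℝ => s (d - e)) ∈ S)
    (hclosed : IsTAdicClosed S) (helem : ∀ s ∈ S, LeftFinite (support s))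
    {s : ℝ → M} (hs : s ∈ S) {a : ℝ} (hlow : ∀ e < a, s e = 0) :
    Pi.single a (s a) ∈ S := by
  rw [single_mem_iff_single_zero_mem ht]
  simpa using single_zero_mem_of_forall_neg_eq_zero hlam hF hclosed helem
    (ht (-a) s hs) fun e he => hlow _ (by linarith)

section

variable {M : Type*} [AddCommGroup M] {S : AddSubgroup (ℝ → M)}

theorem single_mem_of_forall_single_lowest_mem
    (hlow : ∀ s ∈ S, ∀ a : ℝ, (∀ e < a, s e = 0) → Pi.single a (s a) ∈ S)
    {s : ℝ → M} (hs : s ∈ S) {d : ℝ} (hfin : (support s ∩ Iio d).Finite) :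
    Pi.single d (s d) ∈ S := by
  induction hn : (support s ∩ Iio d).ncard using Nat.strong_induction_on generalizing s with
  | _ n ih =>
  rcases (support s ∩ Iio d).eq_empty_or_nonempty with hempty | hne
  · refine hlow s hs d fun e he => ?_
    by_contra hse
    exact hempty.subset ⟨hse, he⟩
  · obtain ⟨a, ha, hmin⟩ := exists_min_image _ id hfin hne
    have ha_mem : Pi.single a (s a) ∈ S := hlow s hs a fun e he => by
      by_contra hse
      exact (hmin e ⟨hse, he.trans ha.2⟩).not_gt he
    have hupd : update s a 0 ∈ S := by
      rw [Pi.update_eq_sub_add_single, Pi.single_zero, add_zero]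
      exact S.sub_mem hs ha_mem
    have hsupp : support (update s a 0) ∩ Iio d = (support s ∩ Iio d) \ {a} := by
      rw [support_update_zero, inter_sdiff_right_comm]
    have hlt : (support (update s a 0) ∩ Iio d).ncard < n := by
      rw [hsupp, ← hn]
      exact ncard_sdiff_singleton_lt_of_mem ha hfin
    have := ih _ hlt hupd (hsupp ▸ hfin.sdiff) rfl
    rwa [update_of_ne ha.2.ne'] at this

theorem mem_of_forall_single_mem (hclosed : IsTAdicClosed (S : Set (ℝ → M))) {x : ℝ → M}
    (hx : LeftFinite (support x)) (hcoeff : ∀ d : ℝ, Pi.single d (x d) ∈ S) : x ∈ S :=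
  hclosed x hx fun d =>
    ⟨_, S.sum_mem fun e _ => hcoeff e, fun _ he => eq_sum_single_apply_of_lt (hx d) he⟩

end

/-- `M₀((t^ℝ))` is modeled by coefficient functions `ℝ → M₀` with left-finite support;
`F` acts as `s ↦ (d ↦ s (d / lam))`, multiplication by `tᵉ` as `s ↦ (d ↦ s (d - e))`,
and `hclosed` expresses closedness in the `t`-adic topology. -/
theorem frobenius_stable_closed_submodule (A : Type*) [CommRing A]
    (M₀ : Type*) [AddCommGroup M₀] [Module A M₀] (lam : ℝ) (hlam : 1 < lam)
    (S : Submodule A (ℝ → M₀))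
    (helem : ∀ s ∈ S, LeftFinite (Function.support s))
    (hF : ∀ s ∈ S, (fun d : ℝ => s (d / lam)) ∈ S)
    (ht : ∀ (e : ℝ), ∀ s ∈ S, (fun d : ℝ => s (d - e)) ∈ S)
    (hclosed : ∀ x : ℝ → M₀, LeftFinite (Function.support x) →
      (∀ d : ℝ, ∃ s ∈ S, ∀ e < d, x e = s e) → x ∈ S) :
    ∃ S₀ : Submodule A M₀, ∀ x : ℝ → M₀,
      x ∈ S ↔ (LeftFinite (Function.support x) ∧ ∀ d : ℝ, x d ∈ S₀) := by
  have hcoeff_iff : ∀ d m, Pi.single d m ∈ S ↔ Pi.single 0 m ∈ S :=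
    single_mem_iff_single_zero_mem (S := (S : Set (ℝ → M₀))) ht
  have hlow : ∀ s ∈ S, ∀ a : ℝ, (∀ e < a, s e = 0) → Pi.single a (s a) ∈ S :=
    fun s hs _ => single_mem_of_forall_lt_eq_zero (S := (S : Set (ℝ → M₀))) hlam hF ht hclosed
      helem hs
  refine ⟨S.comap (LinearMap.single A (fun _ : ℝ => M₀) 0), fun x => ?_⟩
  simp only [Submodule.mem_comap, LinearMap.single_apply]
  refine ⟨fun hx => ⟨helem x hx, fun d => (hcoeff_iff d _).1 ?_⟩, fun ⟨hx, hcoeff⟩ => ?_⟩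
  · exact single_mem_of_forall_single_lowest_mem (S := S.toAddSubgroup) hlow hx (helem x hx d)
  · exact mem_of_forall_single_mem (S := S.toAddSubgroup) hclosed hx
      fun d => (hcoeff_iff d _).2 (hcoeff d)
end

section
/- Let $A$ be a commutative ring and $I \subseteq A$ an ideal with $I^2 = 0$. Let $\bar{M}$ be a finite projective $A/I$-module. Then there exists a finite projective $A$-module $M$ together with an isomorphism $M/IM \cong \bar{M}$. -/
/-!
Write `M̄` as the image of an idempotent endomorphism `ē` of `(A/I)ⁿ`. The kernel of
`Mₙ(A) → Mₙ(A/I)` consists of matrices with entries in the nilpotent ideal `I`, so it is a nil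
ideal and `ē` lifts to an idempotent `e` of `Aⁿ`. The image of `e` is a direct summand of `Aⁿ`,
hence finite projective, and reducing it modulo `I` gives the image of `ē`, that is `M̄`.
-/

theorem Matrix.pow_apply_mem_pow {R ι : Type*} [CommRing R] [Fintype ι] [DecidableEq ι]
    {I : Ideal R} {M : Matrix ι ι R} (hM : ∀ i j, M i j ∈ I) (k : ℕ) (i j : ι) :
    (M ^ k) i j ∈ I ^ k := by
  induction k generalizing i j with
  | zero => simp
  | succ k ih =>
    rw [pow_succ, pow_succ, Matrix.mul_apply]
    exact Ideal.sum_mem _ fun l _ => Ideal.mul_mem_mul (ih i l) (hM l j)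

theorem Matrix.exists_isIdempotentElem_map_eq {R ι : Type*} [CommRing R] [Fintype ι]
    [DecidableEq ι] {I : Ideal R} {k : ℕ} (hI : I ^ k = ⊥) {E : Matrix ι ι (R ⧸ I)}
    (hE : IsIdempotentElem E) :
    ∃ e : Matrix ι ι R, IsIdempotentElem e ∧ e.map (Ideal.Quotient.mk I) = E := by
  have hker : ∀ x ∈ RingHom.ker ((Ideal.Quotient.mk I).mapMatrix (m := ι)), IsNilpotent x := by
    intro x hx
    have hxI (i j : ι) : x i j ∈ I :=
      Ideal.Quotient.eq_zero_iff_mem.mp congr($(RingHom.mem_ker.mp hx) i j)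
    refine ⟨k, Matrix.ext fun i j => ?_⟩
    simpa [hI] using Matrix.pow_apply_mem_pow hxI k i j
  have hrange : E ∈ ((Ideal.Quotient.mk I).mapMatrix (m := ι)).range :=
    ⟨E.map fun a => a.out, Matrix.ext fun i j => Ideal.Quotient.mk_out (E i j)⟩
  exact exists_isIdempotentElem_eq_of_ker_isNilpotent _ hker E hrange hE

theorem Ideal.ker_mkₐ_compLeft {R ι : Type*} [CommRing R] [Finite ι] (I : Ideal R) :
    LinearMap.ker ((Ideal.Quotient.mkₐ R I).toLinearMap.compLeft ι) = I • ⊤ := by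
  classical
  cases nonempty_fintype ι
  refine le_antisymm (fun x hx => ?_) (Submodule.smul_le.mpr fun a ha y _ => ?_)
  · have hxI (i : ι) : x i ∈ I := Ideal.Quotient.eq_zero_iff_mem.mp congr($hx i)
    rw [pi_eq_sum_univ x]
    exact Submodule.sum_mem _ fun i _ => Submodule.smul_mem_smul (hxI i) trivial
  · ext i
    simp [Ideal.Quotient.eq_zero_iff_mem.mpr (I.mul_mem_right (y i) ha)]

theorem Ideal.exists_isIdempotentElem_end_lift {R ι : Type*} [CommRing R] [Fintype ι]
    [DecidableEq ι] {I : Ideal R} {k : ℕ} (hI : I ^ k = ⊥)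
    {ebar : Module.End (R ⧸ I) (ι → R ⧸ I)} (hebar : IsIdempotentElem ebar) :
    ∃ e : Module.End R (ι → R), IsIdempotentElem e ∧
      (Ideal.Quotient.mkₐ R I).toLinearMap.compLeft ι ∘ₗ e =
        ebar.restrictScalars R ∘ₗ (Ideal.Quotient.mkₐ R I).toLinearMap.compLeft ι := by
  obtain ⟨E, hE, hEbar⟩ :=
    Matrix.exists_isIdempotentElem_map_eq hI (hebar.map LinearMap.toMatrixAlgEquiv')
  refine ⟨Matrix.toLinAlgEquiv' E, hE.map _, LinearMap.ext fun v => funext fun i => ?_⟩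
  calc Ideal.Quotient.mk I (E.mulVec v i)
      _ = (E.map (Ideal.Quotient.mk I)).mulVec (Ideal.Quotient.mk I ∘ v) i := RingHom.map_mulVec ..
      _ = ebar (Ideal.Quotient.mk I ∘ v) i := by
        rw [hEbar, ← Matrix.toLinAlgEquiv'_apply, Matrix.toLinAlgEquiv'_toMatrixAlgEquiv']

theorem Module.Projective.range_of_isIdempotentElem {R F : Type*} [Ring R] [AddCommGroup F]
    [Module R F] [Module.Projective R F] {e : Module.End R F} (he : IsIdempotentElem e) :
    Module.Projective R (LinearMap.range e) :=
  .of_split (LinearMap.range e).subtype e.rangeRestrict <|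
    LinearMap.ext fun x => Subtype.ext ((LinearMap.IsIdempotentElem.mem_range_iff he).mp x.2)

/-- `q` plays the role of the reduction `F → F/IF`, `r` and `s` exhibit `M` as a retract of
`Fbar`, and `e` lifts the idempotent `s ∘ r`. -/
theorem nonempty_range_quot_smul_top_equiv_of_lift {R F Fbar M : Type*} [CommRing R]
    {I : Ideal R} [AddCommGroup F] [Module R F] [AddCommGroup Fbar] [Module R Fbar]
    [AddCommGroup M] [Module R M] {q : F →ₗ[R] Fbar} (hq : Function.Surjective q)
    (hker : LinearMap.ker q = I • ⊤) {r : Fbar →ₗ[R] M} {s : M →ₗ[R] Fbar}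
    (hrs : r ∘ₗ s = LinearMap.id) {e : Module.End R F} (he : IsIdempotentElem e)
    (hqe : q ∘ₗ e = (s ∘ₗ r) ∘ₗ q) :
    Nonempty ((LinearMap.range e ⧸ I • (⊤ : Submodule R (LinearMap.range e))) ≃ₗ[R] M) := by
  have hqe' (x : F) : q (e x) = s (r (q x)) := congr($hqe x)
  have hrs' (m : M) : r (s m) = m := congr($hrs m)
  let φ : LinearMap.range e →ₗ[R] M := r ∘ₗ q ∘ₗ (LinearMap.range e).subtype
  have hφ : Function.Surjective φ := by
    intro m
    obtain ⟨y, hy⟩ := hq (s m)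
    exact ⟨⟨e y, LinearMap.mem_range_self e y⟩, by simp [φ, hqe', hy, hrs']⟩
  have hφker : LinearMap.ker φ = I • ⊤ := by
    refine le_antisymm ?_ (Submodule.smul_le.mpr fun a ha y _ => ?_)
    · rintro ⟨x, hx⟩ hφx
      have hex : e x = x := (LinearMap.IsIdempotentElem.mem_range_iff he).mp hx
      have hqx : q x = 0 := by
        rw [← hex, hqe']
        simpa [φ] using congr(s $hφx)
      have hxI : x ∈ I • (⊤ : Submodule R F) := hker ▸ hqx
      have : x ∈ I • LinearMap.range e := by
        rw [LinearMap.range_eq_map, ← Submodule.map_smul'']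
        exact ⟨x, hxI, hex⟩
      exact (Submodule.mem_smul_top_iff _ _ _).mpr this
    · have : a • (y : F) ∈ LinearMap.ker q := hker ▸ Submodule.smul_mem_smul ha trivial
      simpa [φ] using congr(r $this)
  exact ⟨(Submodule.quotEquivOfEq _ _ hφker.symm).trans (φ.quotKerEquivOfSurjective hφ)⟩

/-- Finite projective modules deform across square-zero thickenings: if `I ⊆ A` is an ideal
with `I² = 0` and `M̄` is a finite projective `A/I`-module, then there is a finite projective
`A`-module `M` with `M/IM ≅ M̄` (as `A`-modules, `M̄` being an `A`-module via `A → A/I`). -/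
theorem deform_finite_projective_square_zero (A : Type u) [CommRing A] (I : Ideal A)
    (hI : I ^ 2 = ⊥)
    (Mbar : Type u) [AddCommGroup Mbar] [Module (A ⧸ I) Mbar]
    [Module.Finite (A ⧸ I) Mbar] [Module.Projective (A ⧸ I) Mbar] :
    letI : Module A Mbar := Module.compHom Mbar (Ideal.Quotient.mk I)
    ∃ M : ModuleCat.{u} A, Module.Finite A M ∧ Module.Projective A M ∧
      Nonempty ((M ⧸ (I • (⊤ : Submodule A M))) ≃ₗ[A] Mbar) := by
  let : Module A Mbar := Module.compHom Mbar (Ideal.Quotient.mk I)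
  have : IsScalarTower A (A ⧸ I) Mbar := .of_algebraMap_smul fun _ _ => rfl
  obtain ⟨n, f, g, -, -, hfg⟩ := Module.Finite.exists_comp_eq_id_of_projective (A ⧸ I) Mbar
  have hgf : IsIdempotentElem (g ∘ₗ f) :=
    LinearMap.ext fun x => congr(g $(DFunLike.congr_fun hfg (f x)))
  obtain ⟨e, he, hqe⟩ := Ideal.exists_isIdempotentElem_end_lift hI hgf
  refine ⟨ModuleCat.of A (LinearMap.range e), inferInstance,
    .range_of_isIdempotentElem he, ?_⟩
  exact nonempty_range_quot_smul_top_equiv_of_lift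
    (Ideal.Quotient.mkₐ_surjective A I).comp_left (Ideal.ker_mkₐ_compLeft I)
    (r := f.restrictScalars A) (s := g.restrictScalars A) congr(LinearMap.restrictScalars A $hfg)
    he hqe
end
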